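/- Let t ≥ 1 and let G = t·K_{1,2} be the disjoint union of t paths on 3 vertices (so n = 3t vertices and m = 2t edges). Then the characteristic polynomial of the adjacency matrix of the complete subdivision graph of G, namely of the 5t×5t block matrix [[0_{3t×3t}, B(G)],[B(G)ᵀ, J_{2t} − I_{2t}]], equals x^t · (x² + x − 1)^t · (x² + x − 3)^{t−1} · (x² − (2t−1)x − 3). -/

import Mathlib

/-!
Write the matrix as `x • 1 - [[0, B], [Bᵀ, J - 1]]`. For `x ≠ 0` the Schur complement of the
vertex block is `x • 1 - (J - 1) - x⁻¹ • BᵀB`, and `BᵀB = 1 ⊗ [[2, 1], [1, 2]]`, so the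
complement is `1 ⊗ T - J` with `T = (x + 1) • 1 - x⁻¹ • [[2, 1], [1, 2]]`. The all-ones
vector is an eigenvector of `1 ⊗ T` (eigenvalue `(x² + x - 3) / x`), which turns the matrix
determinant lemma for the rank-one update `J` into a closed formula. This proves the identity
away from the roots of `x (x² + x - 1) (x² + x - 3)`, and continuity in `x` gives it everywhere.
-/

open Matrix

/-- The vertex–edge incidence matrix of $t\cdot K_{1,2}$, the disjoint union of
`t` paths on 3 vertices: in each copy `s`, the vertices are `(s,0),(s,1),(s,2)`
and edge `(s,e)` joins `(s,e)` and `(s,e+1)`. -/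
def tK12B (t : ℕ) : Matrix (Fin t × Fin 3) (Fin t × Fin 2) ℝ :=
  Matrix.of fun v e =>
    if v.1 = e.1 ∧ (v.2 = e.2.castSucc ∨ v.2 = e.2.succ) then 1 else 0

open Kronecker Polynomial

section Determinants

variable {K : Type*} [Field K] {m n : Type*} [Fintype m] [DecidableEq m] [Fintype n]
  [DecidableEq n]

theorem det_smul_one_sub_fromBlocks_zero {x : K} (hx : x ≠ 0) (B : Matrix m n K)
    (C : Matrix n m K) (D : Matrix n n K) :
    (x • 1 - fromBlocks 0 B C D).det =
      x ^ Fintype.card m * (x • 1 - D - x⁻¹ • (C * B)).det := by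
  have hblocks : x • 1 - fromBlocks 0 B C D = fromBlocks (x • 1) (-B) (-C) (x • 1 - D) := by
    ext (i | i) (j | j) <;> simp [one_apply]
  have hinv : x • (1 : Matrix m m K) * x⁻¹ • 1 = 1 := by simp [hx]
  let : Invertible (x • 1 : Matrix m m K) := ⟨x⁻¹ • 1, by simp [hx], hinv⟩
  rw [hblocks, det_fromBlocks₁₁, invOf_eq_right_inv hinv]
  simp

theorem det_sub_ones_of_mulVec_one {A : Matrix n n K} (hA : IsUnit A.det) {c : K}
    (hc : c ≠ 0) (hrow : A *ᵥ 1 = c • 1) :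
    (A - of fun _ _ => 1).det = A.det * (1 - Fintype.card n / c) := by
  have hinv : A⁻¹ *ᵥ 1 = c⁻¹ • 1 := by
    calc A⁻¹ *ᵥ 1 = c⁻¹ • (A⁻¹ *ᵥ (A *ᵥ 1)) := by
          rw [hrow, mulVec_smul, inv_smul_smul₀ hc]
      _ = c⁻¹ • 1 := by rw [mulVec_mulVec, nonsing_inv_mul _ hA, one_mulVec]
  have := det_add_replicateCol_mul_replicateRow (ι := Unit) hA (-1) 1
  convert this using 2
  · ext; simp [sub_eq_add_neg, Matrix.mul_apply]
  rw [Matrix.mul_assoc, ← replicateCol_mulVec, replicateRow_mul_replicateCol, mulVec_neg, hinv]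
  simp [div_eq_mul_inv, sub_eq_add_neg, mul_comm]

end Determinants

theorem one_kronecker_mulVec_one {R ι κ : Type*} [CommSemiring R] [Fintype ι] [DecidableEq ι]
    [Fintype κ] {T : Matrix κ κ R} {c : R} (hT : T *ᵥ 1 = c • 1) :
    ((1 : Matrix ι ι R) ⊗ₖ T) *ᵥ 1 = c • 1 := by
  ext ⟨i, k⟩
  simpa [mulVec, dotProduct, Fintype.sum_prod_type, one_apply, ite_mul] using congrFun hT k

def incidenceP3 : Matrix (Fin 3) (Fin 2) ℝ := !![1, 0; 1, 1; 0, 1]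

theorem tK12B_eq_one_kronecker (t : ℕ) :
    tK12B t = (1 : Matrix (Fin t) (Fin t) ℝ) ⊗ₖ incidenceP3 := by
  ext ⟨s, i⟩ ⟨u, j⟩
  rcases eq_or_ne s u with rfl | hsu
  · fin_cases i <;> fin_cases j <;> simp [tK12B, incidenceP3, Fin.ext_iff]
  · simp [tK12B, hsu]

theorem transpose_tK12B_mul_tK12B (t : ℕ) :
    (tK12B t)ᵀ * tK12B t = (1 : Matrix (Fin t) (Fin t) ℝ) ⊗ₖ !![2, 1; 1, 2] := by
  rw [tK12B_eq_one_kronecker, ← kroneckerMap_transpose, transpose_one, ← mul_kronecker_mul,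
    Matrix.one_mul]
  congr 1
  ext i j
  fin_cases i <;> fin_cases j <;> simp [incidenceP3, Matrix.mul_apply, Fin.sum_univ_succ] <;>
    norm_num

section SchurComplement

variable {x : ℝ}

noncomputable def schurBlock (x : ℝ) : Matrix (Fin 2) (Fin 2) ℝ :=
  (x + 1) • 1 - x⁻¹ • !![2, 1; 1, 2]

theorem det_schurBlock (hx : x ≠ 0) :
    (schurBlock x).det = (x ^ 2 + x - 1) * (x ^ 2 + x - 3) / x ^ 2 := by
  rw [schurBlock, det_fin_two]
  simp [one_apply]
  field_simp
  ring

theorem schurBlock_mulVec_one (hx : x ≠ 0) :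
    schurBlock x *ᵥ 1 = ((x ^ 2 + x - 3) / x) • 1 := by
  ext i
  fin_cases i <;> simp [schurBlock, mulVec, dotProduct, Fin.sum_univ_two, one_apply] <;>
    field_simp <;> ring

theorem det_completeSubdivision_tK12B_of_ne {t : ℕ} (ht : 1 ≤ t) (hx : x ≠ 0)
    (h1 : x ^ 2 + x - 1 ≠ 0) (h3 : x ^ 2 + x - 3 ≠ 0) :
    (x • (1 : Matrix ((Fin t × Fin 3) ⊕ (Fin t × Fin 2))
            ((Fin t × Fin 3) ⊕ (Fin t × Fin 2)) ℝ) -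
        Matrix.fromBlocks 0 (tK12B t) (tK12B t)ᵀ
          (Matrix.of (fun _ _ => (1 : ℝ)) - 1)).det
      = x ^ t * (x ^ 2 + x - 1) ^ t * (x ^ 2 + x - 3) ^ (t - 1) *
          (x ^ 2 - (2 * (t : ℝ) - 1) * x - 3) := by
  have hS : x • 1 - (of (fun _ _ => 1) - 1) -
        x⁻¹ • ((1 : Matrix (Fin t) (Fin t) ℝ) ⊗ₖ !![2, 1; 1, 2]) =
      1 ⊗ₖ schurBlock x - of fun _ _ => 1 := by
    rw [schurBlock, sub_eq_add_neg ((x + 1) • (1 : Matrix (Fin 2) (Fin 2) ℝ)), ← neg_smul,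
      kronecker_add, kronecker_smul, kronecker_smul, one_kronecker_one]
    module
  have hdet : ((1 : Matrix (Fin t) (Fin t) ℝ) ⊗ₖ schurBlock x).det =
      ((x ^ 2 + x - 1) * (x ^ 2 + x - 3) / x ^ 2) ^ t := by
    rw [det_kronecker, det_one, one_pow, one_mul, det_schurBlock hx, Fintype.card_fin]
  have hunit : IsUnit ((1 : Matrix (Fin t) (Fin t) ℝ) ⊗ₖ schurBlock x).det := by
    rw [hdet]
    exact (div_ne_zero (mul_ne_zero h1 h3) (pow_ne_zero 2 hx)).isUnit.pow t
  rw [det_smul_one_sub_fromBlocks_zero hx, transpose_tK12B_mul_tK12B, hS,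
    det_sub_ones_of_mulVec_one hunit (div_ne_zero h3 hx)
      (one_kronecker_mulVec_one (schurBlock_mulVec_one hx)), hdet]
  obtain ⟨k, rfl⟩ := Nat.exists_eq_add_of_le' ht
  rw [show x ^ 2 - (2 * ((k + 1 : ℕ) : ℝ) - 1) * x - 3 = x ^ 2 + x - 3 - 2 * (k + 1) * x by
    push_cast; ring]
  simp only [Fintype.card_prod, Fintype.card_fin, Nat.add_sub_cancel, Nat.cast_add, Nat.cast_one,
    Nat.cast_mul, Nat.cast_ofNat]
  generalize x ^ 2 + x - 1 = a at h1 ⊢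
  generalize x ^ 2 + x - 3 = b at h3 ⊢
  rw [div_pow, mul_pow, pow_succ b,
    show x ^ ((k + 1) * 3) = x ^ (k + 1) * (x ^ 2) ^ (k + 1) by ring]
  field_simp

end SchurComplement

theorem Polynomial.eq_of_continuous_of_eval_ne_zero {Y : Type*} [TopologicalSpace Y] [T2Space Y]
    {f g : ℝ → Y} (hf : Continuous f) (hg : Continuous g) {p : ℝ[X]} (hp : p ≠ 0)
    (hfg : ∀ x, p.eval x ≠ 0 → f x = g x) : f = g :=
  hf.ext_on ((finite_setOfPred_isRoot hp).countable.dense_compl ℝ) hg fun x hx => hfg x hx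

/-- `A`-characteristic polynomial of the complete subdivision
graph of $t\cdot K_{1,2}$. -/
theorem stmt_17 (t : ℕ) (ht : 1 ≤ t) (x : ℝ) :
    (x • (1 : Matrix ((Fin t × Fin 3) ⊕ (Fin t × Fin 2))
            ((Fin t × Fin 3) ⊕ (Fin t × Fin 2)) ℝ) -
        Matrix.fromBlocks 0 (tK12B t) (tK12B t)ᵀ
          (Matrix.of (fun _ _ => (1 : ℝ)) - 1)).det
      = x ^ t * (x ^ 2 + x - 1) ^ t * (x ^ 2 + x - 3) ^ (t - 1) *
          (x ^ 2 - (2 * (t : ℝ) - 1) * x - 3) := by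
  let p : ℝ[X] := X * (X ^ 2 + X - 1) * (X ^ 2 + X - 3)
  have hp : p ≠ 0 := fun h => by
    have h1 := congrArg (eval 1) h
    norm_num [p] at h1
  revert x
  rw [← funext_iff]
  refine Polynomial.eq_of_continuous_of_eval_ne_zero ?_ ?_ hp ?_
  · exact ((continuous_id.smul continuous_const).sub continuous_const).matrix_det
  · fun_prop
  · intro y hy
    simp only [p, eval_mul, eval_sub, eval_add, eval_pow, eval_X, eval_one, eval_ofNat,
      mul_ne_zero_iff] at hy
    exact det_completeSubdivision_tK12B_of_ne ht hy.1.1 hy.1.2 hy.2
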